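/- arXiv:1208.1302 — 7 statements merged into one kernel-verified Lean document; each statement's English description precedes it below -/
import Mathlib

section
/- There do not exist real tuples b̄₀, …, b̄ₖ ∈ ℝ^m and a polynomial p over ℝ in s + m variables with at most k monomials such that for every sign function η : {0,…,k} → {0,1} there exists x̄ ∈ ℝ^s with (-1)^{η(j)} · p(x̄, b̄ⱼ) > 0 for all j ≤ k. -/
/-- There do not exist real tuples `b 0, …, b k` in `ℝ^m` and a polynomial `p`
over `ℝ` in `s + m` variables with at most `k` monomials such that for every sign function
`η : Fin (k+1) → Bool` there is `x̄ ∈ ℝ^s` with `(-1)^{η j} · p(x̄, b j) > 0` for all `j`. -/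
theorem stmt_1 (s m k : ℕ) (p : MvPolynomial (Fin s ⊕ Fin m) ℝ)
    (hp : p.support.card ≤ k) (b : Fin (k + 1) → Fin m → ℝ) :
    ¬ ∀ η : Fin (k + 1) → Bool, ∃ x : Fin s → ℝ, ∀ j,
        0 < (if η j then (1 : ℝ) else -1) * MvPolynomial.eval (Sum.elim x (b j)) p := by
  classical
  intro h
  -- the "parameter part" vectors, one for each monomial
  let v : p.support → Fin (k + 1) → ℝ :=
    fun d j => MvPolynomial.coeff d.1 p * ∏ i, b j i ^ d.1 (Sum.inr i)
  let T : (Fin (k + 1) → ℝ) →ₗ[ℝ] (p.support → ℝ) :=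
    { toFun := fun c d => ∑ j, c j * v d j
      map_add' := fun c c' => funext fun d => by
        simp [add_mul, Finset.sum_add_distrib]
      map_smul' := fun r c => funext fun d => by
        simp [Finset.mul_sum, mul_assoc] }
  have hnotinj : ¬ Function.Injective T := by
    intro hinj
    have h1 := LinearMap.finrank_le_finrank_of_injective hinj
    simp only [Module.finrank_fintype_fun_eq_card, Fintype.card_fin, Fintype.card_coe] at h1
    omega
  have hker : LinearMap.ker T ≠ ⊥ := fun h' => hnotinj (LinearMap.ker_eq_bot.mp h')
  obtain ⟨c, hcker, hc0⟩ := Submodule.exists_mem_ne_zero_of_ne_bot hker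
  obtain ⟨x, hx⟩ := h fun j => decide (0 < c j)
  set e : Fin (k + 1) → ℝ := fun j => MvPolynomial.eval (Sum.elim x (b j)) p with he
  have key : ∀ j, 0 ≤ c j * e j ∧ (c j ≠ 0 → 0 < c j * e j) := by
    intro j
    have h1 := hx j
    simp only [decide_eq_true_eq] at h1
    by_cases hcj : 0 < c j
    · rw [if_pos hcj, one_mul] at h1
      have hh : 0 < c j * e j := mul_pos hcj h1
      exact ⟨hh.le, fun _ => hh⟩
    · rw [if_neg hcj, neg_one_mul] at h1
      have hen : e j < 0 := by
        have : (0:ℝ) < -(e j) := by simpa using h1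
        linarith
      rcases eq_or_lt_of_le (not_lt.mp hcj) with heq | hlt
      · refine ⟨by simp [heq], fun hne => absurd heq hne⟩
      · have hh : 0 < c j * e j := mul_pos_of_neg_of_neg hlt hen
        exact ⟨hh.le, fun _ => hh⟩
  have hexj : ∃ j, c j ≠ 0 := by
    by_contra hall
    push_neg at hall
    exact hc0 (funext fun j => hall j)
  obtain ⟨j0, hj0⟩ := hexj
  have hpos : 0 < ∑ j, c j * e j :=
    Finset.sum_pos' (fun j _ => (key j).1) ⟨j0, Finset.mem_univ _, (key j0).2 hj0⟩
  have hTc : T c = 0 := LinearMap.mem_ker.mp hcker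
  have hT : ∀ d : p.support, ∑ j, c j * v d j = 0 := fun d => congrFun hTc d
  have heval : ∀ j, e j = ∑ d ∈ p.support.attach,
      MvPolynomial.coeff d.1 p *
        ((∏ i, x i ^ d.1 (Sum.inl i)) * ∏ i, b j i ^ d.1 (Sum.inr i)) := by
    intro j
    rw [he]
    simp only
    rw [MvPolynomial.eval_eq', ← Finset.sum_attach p.support]
    refine Finset.sum_congr rfl fun d _ => ?_
    rw [Fintype.prod_sum_type]
    simp
  have hzero : ∑ j, c j * e j = 0 := by
    calc ∑ j, c j * e j
        = ∑ j, ∑ d ∈ p.support.attach,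
            (∏ i, x i ^ d.1 (Sum.inl i)) * (c j * v d j) := by
          refine Finset.sum_congr rfl fun j _ => ?_
          rw [heval j, Finset.mul_sum]
          refine Finset.sum_congr rfl fun d _ => ?_
          simp only [v]
          ring
      _ = ∑ d ∈ p.support.attach, (∏ i, x i ^ d.1 (Sum.inl i)) * ∑ j, c j * v d j := by
          rw [Finset.sum_comm]
          exact Finset.sum_congr rfl fun d _ => (Finset.mul_sum _ _ _).symm
      _ = 0 := by simp [hT]
  linarith
end

section
/- Let F be an ordered field and ⟨aₜ : t ∈ I⟩ a strictly increasing sequence of positive elements of F indexed by a linear order I, such that for all t₀ < t₁ < … < tₖ in I and every polynomial P with integer coefficients in k variables, a_{tₖ} > P(a_{t₀}, …, a_{t_{k-1}}). Then the downward closure of {aₜ : t ∈ I} in F, intersected with the positive elements, is closed under multiplication, and 2 lies in the downward closure; i.e., the induced cut is multiplicative. -/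
/-- If `⟨a t : t ∈ I⟩` is a strictly increasing sequence of positive elements of an
ordered field such that `a (t k) > P(a (t 0), …, a (t (k-1)))` for all `t 0 < … < t k` in `I`
and every integer polynomial `P` in `k` variables, then the downward closure of the sequence
intersected with the positives is closed under multiplication, and `2` lies in the downward
closure: the induced cut is multiplicative. -/
theorem stmt_6 {F : Type*} [Field F] [LinearOrder F] [IsStrictOrderedRing F]
    {I : Type*} [LinearOrder I] [Nonempty I] [NoMaxOrder I]
    (a : I → F) (hmono : StrictMono a) (hpos : ∀ t, 0 < a t)
    (hbig : ∀ (k : ℕ) (t : Fin (k + 1) → I), StrictMono t →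
      ∀ P : MvPolynomial (Fin k) ℤ,
        MvPolynomial.eval₂ (Int.castRingHom F) (fun i => a (t i.castSucc)) P
          < a (t (Fin.last k))) :
    (2 : F) ∈ {x : F | ∃ t, x ≤ a t} ∧
      ∀ x ∈ {x : F | ∃ t, x ≤ a t}, ∀ y ∈ {x : F | ∃ t, x ≤ a t},
        0 < x → 0 < y → x * y ∈ {x : F | ∃ t, x ≤ a t} := by
  constructor
  · obtain ⟨t0⟩ := ‹Nonempty I›
    have h := hbig 0 (fun _ => t0) (fun i j h => absurd h (by omega))
      (MvPolynomial.C 2)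
    refine ⟨t0, ?_⟩
    simpa using h.le
  · rintro x ⟨s, hs⟩ y ⟨t, ht⟩ hx hy
    set u := max s t with hu
    obtain ⟨v, hv⟩ := exists_gt u
    have hsu : Fin.castSucc (0 : Fin 1) = (0 : Fin 2) := rfl
    have h := hbig 1 ![u, v] ?_ (MvPolynomial.X 0 * MvPolynomial.X 0)
    · refine ⟨v, ?_⟩
      have hxy : x * y ≤ a u * a u := by
        have h1 : x ≤ a u := hs.trans (hmono.monotone (le_max_left s t))
        have h2 : y ≤ a u := ht.trans (hmono.monotone (le_max_right s t))
        exact mul_le_mul h1 h2 hy.le ((hpos u).le)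
      refine hxy.trans ?_
      simpa using h.le
    · intro i j hij
      fin_cases i <;> fin_cases j <;> simp_all
end

section
/- Let F be an ordered field and ⟨aₜ : t ∈ I⟩ a strictly increasing sequence of positive elements of F, indexed by a linear order I without a greatest element, whose downward closure C⁻ is closed under addition (an additive cut). Suppose for all t₀ < t₁ < t₂ < t₃ in I, a_{t₁}/a_{t₀} < a_{t₃}/a_{t₂}. Then the sequence of ratios ⟨a_{t'}/aₜ⟩ (over consecutive pairs t < t' from a 2-spaced subfamily) has downward closure closed under multiplication of positive elements and containing 2. -/
/-- Let `⟨a t : t ∈ I⟩` be a strictly increasing sequence of positive elements of an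
ordered field, `I` without greatest element, whose downward closure is closed under addition (an
additive cut).  If `a t₁ / a t₀ < a t₃ / a t₂` whenever `t₀ < t₁ < t₂ < t₃`, then the downward
closure of the sequence of ratios `a t' / a t` (over pairs `t < t'`) is closed under
multiplication of positive elements and contains `2`: the ratio sequence induces a
multiplicative cut. -/
theorem stmt_8 {F : Type*} [Field F] [LinearOrder F] [IsStrictOrderedRing F]
    {I : Type*} [LinearOrder I] [Nonempty I] [NoMaxOrder I]
    (a : I → F) (hmono : StrictMono a) (hpos : ∀ t, 0 < a t)
    (hadd : ∀ x y : F, (∃ t, x ≤ a t) → (∃ t, y ≤ a t) → ∃ t, x + y ≤ a t)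
    (hratio : ∀ t₀ t₁ t₂ t₃ : I, t₀ < t₁ → t₁ < t₂ → t₂ < t₃ →
      a t₁ / a t₀ < a t₃ / a t₂) :
    (2 : F) ∈ {r : F | ∃ t t' : I, t < t' ∧ r ≤ a t' / a t} ∧
      ∀ x ∈ {r : F | ∃ t t' : I, t < t' ∧ r ≤ a t' / a t},
        ∀ y ∈ {r : F | ∃ t t' : I, t < t' ∧ r ≤ a t' / a t},
          0 < x → 0 < y →
            x * y ∈ {r : F | ∃ t t' : I, t < t' ∧ r ≤ a t' / a t} := by
  constructor
  · -- 2 is in the set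
    obtain ⟨t⟩ := ‹Nonempty I›
    obtain ⟨s, hs⟩ := hadd (a t) (a t) ⟨t, le_refl _⟩ ⟨t, le_refl _⟩
    have hlt : a t < a s := lt_of_lt_of_le (by linarith [hpos t]) hs
    refine ⟨t, s, hmono.lt_iff_lt.mp hlt, ?_⟩
    rw [le_div_iff₀ (hpos t)]
    linarith
  · rintro x ⟨t₀, t₁, ht, hx⟩ y ⟨s₀, s₁, hs, hy⟩ hx0 hy0
    obtain ⟨p₀, hp₀⟩ := exists_gt (max t₁ s₁)
    obtain ⟨p₁, hp₁⟩ := exists_gt p₀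
    obtain ⟨p₂, hp₂⟩ := exists_gt p₁
    have h1 : a t₁ / a t₀ < a p₁ / a p₀ :=
      hratio t₀ t₁ p₀ p₁ ht (lt_of_le_of_lt (le_max_left _ _) hp₀) hp₁
    have h2 : a s₁ / a s₀ < a p₂ / a p₁ :=
      hratio s₀ s₁ p₁ p₂ hs
        (lt_trans (lt_of_le_of_lt (le_max_right _ _) hp₀) hp₁) hp₂
    refine ⟨p₀, p₂, lt_trans hp₁ hp₂, ?_⟩
    have hxy : x * y ≤ (a p₁ / a p₀) * (a p₂ / a p₁) :=
      mul_le_mul (le_of_lt (lt_of_le_of_lt hx h1))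
        (le_of_lt (lt_of_le_of_lt hy h2)) (le_of_lt hy0)
        (le_of_lt (div_pos (hpos p₁) (hpos p₀)))
    calc x * y ≤ (a p₁ / a p₀) * (a p₂ / a p₁) := hxy
      _ = a p₂ / a p₀ := by
          rw [div_mul_div_comm, mul_comm (a p₁) (a p₂), mul_comm (a p₀) (a p₁),
            mul_comm (a p₂) (a p₁), mul_div_mul_left _ _ (hpos p₁).ne']
end

section
/- Let F be a real closed field, S a set of Dedekind cuts of F, and suppose S is algebraically independent in the sense that in no extension field are realizations of cuts in S algebraically dependent over F. Then for every subset D ⊆ S, every real closed extension K of F containing realizations {a_d : d ∈ D} of the cuts in D, the real closure of F({a_d : d ∈ D}) inside K realizes no cut from S ∖ D. -/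
open Filter


/-- A real closed field: an ordered field in which every nonnegative element has a square root
and every odd-degree polynomial has a root. -/
def IsRealClosedField (F : Type*) [Field F] [LinearOrder F] [IsStrictOrderedRing F] : Prop :=
  (∀ x : F, 0 ≤ x → ∃ y, y ^ 2 = x) ∧
    ∀ p : Polynomial F, Odd p.natDegree → ∃ x, Polynomial.eval x p = 0

/-- A real closed ordered field extension of `F`. -/
structure RCFExt (F : Type) [Field F] [LinearOrder F] [IsStrictOrderedRing F] where
  /-- the underlying extension field -/
  K : Type
  /-- the ordered field structure -/
  [instK : Field K]
  [instKLO : LinearOrder K]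
  [instKSOR : IsStrictOrderedRing K]
  /-- the embedding of `F` -/
  emb : F →+* K
  mono : StrictMono emb
  rc : IsRealClosedField K

attribute [instance] RCFExt.instK
attribute [instance] RCFExt.instKLO
attribute [instance] RCFExt.instKSOR

/-- `r` realizes the cut of `F` with lower part `Cm` in the extension `E`. -/
def RealizesCut {F : Type} [Field F] [LinearOrder F] [IsStrictOrderedRing F] (E : RCFExt F) (Cm : Set F) (r : E.K) :
    Prop :=
  (∀ x ∈ Cm, E.emb x < r) ∧ ∀ x ∉ Cm, r < E.emb x

lemma germ_rc {α : Type} (u : Ultrafilter α) {K : Type} [Field K] [LinearOrder K] [IsStrictOrderedRing K]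
    (hK : IsRealClosedField K) : IsRealClosedField (Germ (u : Filter α) K) := by
  constructor
  · intro x
    refine Germ.inductionOn x ?_
    intro f hf
    have hf' : ∀ᶠ n in (u : Filter α), (0:K) ≤ f n := by
      have : (↑(fun (_:α) => (0:K)) : Germ (u:Filter α) K) ≤ ↑f := hf
      exact Germ.coe_le.1 this
    choose g hg using fun n (h : (0:K) ≤ f n) => hK.1 (f n) h
    refine ⟨(↑(fun (n:α) => if h : (0:K) ≤ f n then g n h else 0) : Germ (u:Filter α) K), ?_⟩
    rw [← Germ.coe_pow]
    refine Germ.coe_eq.2 ?_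
    filter_upwards [hf'] with n hn
    simp only [Pi.pow_apply, dif_pos hn, hg n hn]
  · intro p hodd
    classical
    have hp0 : p ≠ 0 := by intro h0; rw [h0] at hodd; simp at hodd
    set d := p.natDegree with hd
    -- representatives of coefficients
    have hrep : ∀ m : ℕ, ∃ c : α → K, (↑c : Germ (u:Filter α) K) = p.coeff m := fun m =>
      Germ.inductionOn (p.coeff m) fun c => ⟨c, rfl⟩
    choose c hc using hrep
    -- pointwise polynomials
    set P : α → Polynomial K := fun n =>
      ∑ m ∈ Finset.range (d + 1), Polynomial.C (c m n) * Polynomial.X ^ m with hP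
    have hPcoeff : ∀ n k, (P n).coeff k = if k ≤ d then c k n else 0 := by
      intro n k
      simp only [hP, Polynomial.finset_sum_coeff, Polynomial.coeff_C_mul, Polynomial.coeff_X_pow]
      by_cases hk : k ≤ d
      · rw [if_pos hk, Finset.sum_eq_single k]
        · simp
        · intro m _ hm; simp [Ne.symm hm]
        · intro hk'; exact absurd (Finset.mem_range.2 (Nat.lt_succ_of_le hk)) hk'
      · rw [if_neg hk]
        refine Finset.sum_eq_zero fun m hm => ?_
        have : k ≠ m := by
          rw [Finset.mem_range, Nat.lt_succ_iff] at hm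
          omega
        simp [this]
    have hlead : ∀ᶠ n in (u:Filter α), c d n ≠ 0 := by
      have h1 : (↑(c d) : Germ (u:Filter α) K) ≠ 0 := by
        rw [hc d]; exact fun h => Polynomial.leadingCoeff_ne_zero.2 hp0 h
      rw [Ultrafilter.eventually_not]
      intro h
      exact h1 (by rw [← Germ.coe_zero]; exact Germ.coe_eq.2 h)
    have hdeg : ∀ n, c d n ≠ 0 → (P n).natDegree = d := by
      intro n hn
      refine le_antisymm ?_ (Polynomial.le_natDegree_of_ne_zero ?_)
      · rw [Polynomial.natDegree_le_iff_coeff_eq_zero]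
        intro N hN; rw [hPcoeff]; simp [not_le.2 hN]
      · rw [hPcoeff]; simpa using hn
    -- roots
    set x : α → K := fun n =>
      if h : Odd (P n).natDegree then Classical.choose (hK.2 (P n) h) else 0 with hx
    have hroot : ∀ᶠ n in (u:Filter α), Polynomial.eval (x n) (P n) = 0 := by
      filter_upwards [hlead] with n hn
      have ho : Odd (P n).natDegree := by rw [hdeg n hn]; exact hodd
      simp only [hx, dif_pos ho]
      exact Classical.choose_spec (hK.2 (P n) ho)
    refine ⟨(↑x : Germ (u:Filter α) K), ?_⟩
    have heval : Polynomial.eval (↑x : Germ (u:Filter α) K) p =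
        (↑(fun n => Polynomial.eval (x n) (P n)) : Germ (u:Filter α) K) := by
      rw [Polynomial.eval_eq_sum_range]
      have : ∀ n, Polynomial.eval (x n) (P n) =
          ∑ m ∈ Finset.range (d + 1), c m n * x n ^ m := by
        intro n
        simp [hP, Polynomial.eval_finset_sum]
      simp only [this]
      have harg : (fun n => ∑ m ∈ Finset.range (d+1), c m n * x n ^ m)
          = ∑ m ∈ Finset.range (d+1), (fun n => c m n * x n ^ m) := by
        funext n; simp
      refine Eq.symm ?_
      calc (↑(fun n => ∑ m ∈ Finset.range (d+1), c m n * x n ^ m) : Germ (u:Filter α) K)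
          = Germ.coeRingHom (u:Filter α)
              (∑ m ∈ Finset.range (d+1), fun n => c m n * x n ^ m) := by rw [← harg]; rfl
        _ = ∑ m ∈ Finset.range (d+1),
              Germ.coeRingHom (u:Filter α) (fun n => c m n * x n ^ m) := map_sum _ _ _
        _ = ∑ m ∈ Finset.range (d+1), p.coeff m * (↑x : Germ (u:Filter α) K) ^ m := by
              refine Finset.sum_congr rfl fun m _ => ?_
              rw [← hc m]
              rw [show (Germ.coeRingHom (u:Filter α) (fun n => c m n * x n ^ m))
                = Germ.coeRingHom (u:Filter α) (c m) * (Germ.coeRingHom (u:Filter α) x) ^ m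
                from by rw [← map_pow, ← map_mul]; rfl]
              rfl
    rw [heval, ← Germ.coe_zero]
    exact Germ.coe_eq.2 hroot

/-- Let `F` be a real closed field and `C i` (for `i : ι`) a family of Dedekind
cuts of `F` that is algebraically independent: in no real closed extension are realizations of
the cuts algebraically dependent over `F`.  Then for every subset `D ⊆ ι` and every real closed
extension `E` of `F` with realizations `r i` (`i ∈ D`) of the cuts in `D`, the real closure of
`F({r i : i ∈ D})` inside `E.K` (the set of elements algebraic over the subfield generated by
`F` and the `r i`) realizes no cut `C i` with `i ∉ D`. -/
theorem stmt_10 {F : Type} [Field F] [LinearOrder F] [IsStrictOrderedRing F] (hF : IsRealClosedField F)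
    {ι : Type} (C : ι → Set F)
    (hlow : ∀ i, ∀ x ∈ C i, ∀ y : F, y ≤ x → y ∈ C i)
    (hnomax : ∀ i, ∀ x ∈ C i, ∃ y ∈ C i, x < y)
    (hnomin : ∀ i, ∀ x ∉ C i, ∃ y ∉ C i, y < x)
    (hne : ∀ i, (C i).Nonempty) (hne' : ∀ i, (C i)ᶜ.Nonempty)
    (hind : ∀ (E : RCFExt F) (r : ι → E.K), (∀ i, RealizesCut E (C i) (r i)) →
      ∀ (n : ℕ) (p : MvPolynomial (Fin n) F) (v : Fin n → ι),
        Function.Injective v → p ≠ 0 →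
          MvPolynomial.eval₂ E.emb (fun j => r (v j)) p ≠ 0)
    (D : Set ι) (E : RCFExt F) (r : ι → E.K)
    (hr : ∀ i ∈ D, RealizesCut E (C i) (r i))
    (i : ι) (hi : i ∉ D) (b : E.K)
    (hb : ∃ q : Polynomial E.K, q ≠ 0 ∧
      (∀ m : ℕ, q.coeff m ∈ Subfield.closure (Set.range ⇑E.emb ∪ r '' D)) ∧
      Polynomial.eval b q = 0) :
    ¬ RealizesCut E (C i) b := by
  classical
  intro hbc
  obtain ⟨q, hq0, hqc, hqe⟩ := hb
  -- ===== Part 1 : ultrapower extension realizing all cuts =====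
  let I : Type := ∀ j : ι, {x : F // x ∈ C j}
  haveI hIne : Nonempty I := ⟨fun j => ⟨(hne j).choose, (hne j).choose_spec⟩⟩
  let u : Ultrafilter I := Ultrafilter.of Filter.atTop
  have hatTop : (u : Filter I) ≤ Filter.atTop := Ultrafilter.of_le _
  let G : Type := Germ (u : Filter I) E.K
  let cRH : E.K →+* G := (Germ.coeRingHom (u : Filter I)).comp (Pi.constRingHom I E.K)
  have hmono : StrictMono (cRH.comp E.emb) := by
    intro a c h
    exact Germ.const_lt (E.mono h)
  let E' : RCFExt F := { K := G, emb := cRH.comp E.emb, mono := hmono, rc := germ_rc u E.rc }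
  let r' : ι → G := fun j =>
    if j = i then Germ.const b
    else if j ∈ D then Germ.const (r j)
    else (↑(fun g : I => E.emb ↑(g j)) : G)
  have hconstlt : ∀ (x y : E.K), x < y → (Germ.const x : G) < Germ.const y :=
    fun x y h => Germ.const_lt h
  have hreal : ∀ j, RealizesCut E' (C j) (r' j) := by
    intro j
    by_cases hji : j = i
    · subst hji
      simp only [r', if_pos rfl]
      exact ⟨fun x hx => hconstlt _ _ (hbc.1 x hx), fun x hx => hconstlt _ _ (hbc.2 x hx)⟩
    · by_cases hjD : j ∈ D
      · simp only [r', if_neg hji, if_pos hjD]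
        exact ⟨fun x hx => hconstlt _ _ ((hr j hjD).1 x hx),
               fun x hx => hconstlt _ _ ((hr j hjD).2 x hx)⟩
      · simp only [r', if_neg hji, if_neg hjD]
        constructor
        · intro x hx
          obtain ⟨y, hy, hxy⟩ := hnomax j x hx
          refine Germ.coe_lt.2 (Filter.Eventually.filter_mono hatTop ?_)
          rw [Filter.eventually_atTop]
          refine ⟨Function.update (Classical.arbitrary I) j ⟨y, hy⟩, fun g hg => ?_⟩
          have h1 : Function.update (Classical.arbitrary I) j ⟨y, hy⟩ j ≤ g j := hg j
          rw [Function.update_self] at h1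
          exact E.mono (lt_of_lt_of_le hxy h1)
        · intro x hx
          refine Germ.coe_lt.2 (Filter.Eventually.of_forall fun g => ?_)
          refine E.mono ?_
          by_contra hle
          exact hx (hlow j _ (g j).2 x (le_of_not_gt hle))
  -- ===== Part 2 : algebraic dependence polynomial =====
  set T : Set E.K := Set.range ⇑E.emb ∪ r '' D with hT
  let φ : MvPolynomial (↥(r '' D)) F →+* E.K := MvPolynomial.eval₂Hom E.emb Subtype.val
  have hTsub : Subring.closure T ≤ φ.range := by
    rw [Subring.closure_le]
    rintro x (⟨a, rfl⟩ | hx)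
    · exact ⟨MvPolynomial.C a, MvPolynomial.eval₂_C _ _ _⟩
    · exact ⟨MvPolynomial.X ⟨x, hx⟩, MvPolynomial.eval₂_X _ _ _⟩
  have hfrac : ∀ m : ℕ, ∃ yz : E.K × E.K, yz.1 ∈ Subring.closure T ∧ yz.2 ∈ Subring.closure T ∧
      yz.2 ≠ 0 ∧ q.coeff m = yz.1 / yz.2 := by
    intro m
    obtain ⟨yy, hyy, zz, hzz, hyz⟩ := Subfield.mem_closure_iff.1 (hqc m)
    by_cases hz0 : zz = 0
    · exact ⟨(0, 1), Subring.zero_mem _, Subring.one_mem _, one_ne_zero, by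
        rw [← hyz, hz0, div_zero, zero_div]⟩
    · exact ⟨(yy, zz), hyy, hzz, hz0, hyz.symm⟩
  choose yz hy hz hz0 hyz using hfrac
  set s : Finset ℕ := q.support with hs
  set z0 : E.K := ∏ m ∈ s, (yz m).2 with hz0def
  have hz00 : z0 ≠ 0 := Finset.prod_ne_zero_iff.2 fun m _ => hz0 m
  have hcoef : ∀ m ∈ s, z0 * q.coeff m ∈ Subring.closure T := by
    intro m hm
    have h1 : z0 = (yz m).2 * ∏ m' ∈ s.erase m, (yz m').2 :=
      (Finset.mul_prod_erase s _ hm).symm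
    have h2 : z0 * q.coeff m = (yz m).1 * ∏ m' ∈ s.erase m, (yz m').2 := by
      rw [hyz m, h1]
      rw [mul_comm ((yz m).2) _, mul_assoc, mul_div_assoc']
      rw [mul_div_cancel_left₀ _ (hz0 m)]
      exact mul_comm _ _
    rw [h2]
    exact Subring.mul_mem _ (hy m) (Subring.prod_mem _ fun m' _ => hz m')
  have hPm : ∀ m : ℕ, ∃ P : MvPolynomial (↥(r '' D)) F,
      m ∈ s → φ P = z0 * q.coeff m := by
    intro m
    by_cases hm : m ∈ s
    · obtain ⟨P, hP⟩ := hTsub (hcoef m hm); exact ⟨P, fun _ => hP⟩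
    · exact ⟨0, fun h => absurd h hm⟩
  choose P hP using hPm
  let V : Type := (↥(r '' D)) ⊕ Unit
  let w0 : V → E.K := Sum.elim Subtype.val fun _ => b
  let p0 : MvPolynomial V F :=
    ∑ m ∈ s, (MvPolynomial.rename Sum.inl (P m)) * (MvPolynomial.X (Sum.inr ())) ^ m
  have heval0 : MvPolynomial.eval₂ E.emb w0 p0 = 0 := by
    rw [show MvPolynomial.eval₂ E.emb w0 p0 = (MvPolynomial.eval₂Hom E.emb w0) p0 from rfl]
    rw [map_sum]
    have hterm : ∀ m ∈ s, (MvPolynomial.eval₂Hom E.emb w0)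
        ((MvPolynomial.rename Sum.inl (P m)) * (MvPolynomial.X (Sum.inr ())) ^ m)
        = (z0 * q.coeff m) * b ^ m := by
      intro m hm
      rw [map_mul, map_pow]
      have e1 : (MvPolynomial.eval₂Hom E.emb w0) (MvPolynomial.rename Sum.inl (P m))
          = z0 * q.coeff m := by
        show MvPolynomial.eval₂ E.emb w0 (MvPolynomial.rename Sum.inl (P m)) = _
        rw [MvPolynomial.eval₂_rename]
        exact hP m hm
      have e2 : (MvPolynomial.eval₂Hom E.emb w0) (MvPolynomial.X (Sum.inr ())) = b :=
        MvPolynomial.eval₂Hom_X' _ _ _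
      rw [e1, e2]
    rw [Finset.sum_congr rfl hterm]
    have h6 : ∑ m ∈ s, z0 * q.coeff m * b ^ m = z0 * ∑ m ∈ s, q.coeff m * b ^ m := by
      rw [Finset.mul_sum]; exact Finset.sum_congr rfl fun m _ => by ring
    rw [h6]
    have h7 : ∑ m ∈ s, q.coeff m * b ^ m = Polynomial.eval b q := by
      rw [Polynomial.eval_eq_sum, Polynomial.sum_def]
    rw [h7, hqe, mul_zero]
  -- nonvanishing of p0
  obtain ⟨m0, hm0⟩ : s.Nonempty := Polynomial.support_nonempty.2 hq0
  have hPm0 : P m0 ≠ 0 := by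
    intro h
    have h8 := hP m0 hm0
    rw [h, map_zero] at h8
    rcases mul_eq_zero.1 h8.symm with h9 | h9
    · exact hz00 h9
    · exact Polynomial.mem_support_iff.1 hm0 h9
  obtain ⟨d, hd⟩ := MvPolynomial.ne_zero_iff.1 hPm0
  set D0 : V →₀ ℕ := Finsupp.mapDomain Sum.inl d + Finsupp.single (Sum.inr ()) m0 with hD0
  have hD0r : D0 (Sum.inr ()) = m0 := by
    rw [hD0, Finsupp.add_apply, Finsupp.mapDomain_notin_range _ _ (by simp),
      Finsupp.single_eq_same, zero_add]
  have hcoeffD0 : MvPolynomial.coeff D0 p0 = MvPolynomial.coeff d (P m0) := by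
    rw [show p0 = ∑ m ∈ s, (MvPolynomial.rename Sum.inl (P m)) * (MvPolynomial.X (Sum.inr ())) ^ m from rfl]
    rw [MvPolynomial.coeff_sum]
    rw [Finset.sum_eq_single_of_mem m0 hm0]
    · rw [MvPolynomial.X_pow_eq_monomial, MvPolynomial.coeff_mul_monomial']
      rw [if_pos (by rw [Finsupp.single_le_iff, hD0r])]
      rw [show D0 - Finsupp.single (Sum.inr ()) m0 = Finsupp.mapDomain Sum.inl d from by
        rw [hD0]; exact add_tsub_cancel_right _ _]
      rw [MvPolynomial.coeff_rename_mapDomain Sum.inl Sum.inl_injective, mul_one]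
    · intro m hm hmne
      rw [MvPolynomial.X_pow_eq_monomial, MvPolynomial.coeff_mul_monomial']
      split_ifs with hle
      · rw [Finsupp.single_le_iff, hD0r] at hle
        have hlt : m < m0 := lt_of_le_of_ne hle hmne
        have hzz : MvPolynomial.coeff (D0 - Finsupp.single (Sum.inr ()) m)
            (MvPolynomial.rename Sum.inl (P m)) = 0 := by
          by_contra hnz
          obtain ⟨e, he, -⟩ := MvPolynomial.coeff_rename_ne_zero _ _ _ hnz
          have h10 : (Finsupp.mapDomain Sum.inl e) (Sum.inr ()) = 0 :=
            Finsupp.mapDomain_notin_range _ _ (by simp)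
          rw [he, Finsupp.tsub_apply, hD0r, Finsupp.single_eq_same] at h10
          omega
        rw [hzz, zero_mul]
      · rfl
  have hp00 : p0 ≠ 0 := fun h => hd (by rw [← hcoeffD0, h, MvPolynomial.coeff_zero])
  -- ===== Part 3 : conclusion =====
  obtain ⟨n, f, hfinj, p, hpeq⟩ := MvPolynomial.exists_fin_rename p0
  have hpne : p ≠ 0 := fun h => hp00 (by rw [hpeq, h, map_zero])
  choose σj hσD hσr using fun t : ↥(r '' D) => t.2
  let τ : V → ι := Sum.elim σj fun _ => i
  have hσne : ∀ t, σj t ≠ i := fun t h => hi (h ▸ hσD t)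
  have hτinj : Function.Injective τ := by
    rintro (t1 | t1) (t2 | t2) h
    · simp only [τ, Sum.elim_inl] at h
      exact congrArg Sum.inl (Subtype.ext (by rw [← hσr t1, ← hσr t2, h]))
    · exact absurd h (hσne t1)
    · exact absurd h.symm (hσne t2)
    · exact congrArg Sum.inr (Subsingleton.elim t1 t2)
  let v : Fin n → ι := τ ∘ f
  have hvinj : Function.Injective v := hτinj.comp hfinj
  refine hind E' r' hreal n p v hvinj hpne ?_
  have h3 : ∀ x : V, r' (τ x) = cRH (w0 x) := by
    rintro (t | ⟨⟩)
    · simp only [r', τ, Sum.elim_inl, if_neg (hσne t), if_pos (hσD t)]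
      rw [show w0 (Sum.inl t) = (↑t : E.K) from rfl, ← hσr t]
      rfl
    · simp only [r', τ, Sum.elim_inr, if_pos rfl]
      rfl
  have h2 : MvPolynomial.eval₂ E'.emb (fun k => r' (v k)) p
      = MvPolynomial.eval₂ E'.emb (fun x => r' (τ x)) p0 := by
    rw [hpeq, MvPolynomial.eval₂_rename]
    rfl
  rw [h2]
  have h5 : (fun x : V => r' (τ x)) = fun x => cRH (w0 x) := funext h3
  rw [h5]
  rw [show MvPolynomial.eval₂ E'.emb (fun x => cRH (w0 x)) p0
      = cRH (MvPolynomial.eval₂ E.emb w0 p0) from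
    (MvPolynomial.eval₂_comp_left cRH E.emb w0 p0).symm]
  rw [heval0, map_zero]
end

section
/- Let T be a first-order theory, φ(x̄, ȳ) a formula, and n a natural number such that T proves there are no b̄₀,…,b̄_{n-1} with all 2ⁿ Boolean combinations ∃x̄ ⋀_{k<n} φ(x̄, b̄ₖ)^{η(k)} consistent. Then for every indiscernible sequence ⟨āₜ : t ∈ I⟩ in a model of T and every tuple b̄, the set {t ∈ I : φ(b̄, āₜ)} is a union of at most 2n−1 convex subsets of I; in particular the truth value of φ(b̄, āₜ) alternates fewer than 2n times along I. -/
open Set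

private lemma strictMono_of_adj {A : Type*} [Preorder A] {m : ℕ} {f : Fin m → A}
    (h : ∀ p : ℕ, ∀ hp : p + 1 < m, f ⟨p, Nat.lt_of_succ_lt hp⟩ < f ⟨p+1, hp⟩) :
    StrictMono f := by
  intro i j hij
  obtain ⟨i, hi⟩ := i
  obtain ⟨j, hj⟩ := j
  rw [Fin.mk_lt_mk] at hij
  induction j with
  | zero => omega
  | succ k ih =>
    rcases Nat.lt_or_ge i k with h' | h'
    · exact lt_trans (ih (Nat.lt_of_succ_lt hj) h') (h k hj)
    · have hik : i = k := by omega
      subst hik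
      exact h i hj

theorem aux_cover {I : Type*} [LinearOrder I] (S : Set I) (n : ℕ) (hn : 0 < n)
    (halt : ∀ u : Fin (2*n) → I, StrictMono u → ¬ ∀ i : Fin (2*n), (u i ∈ S ↔ Even (i:ℕ))) :
    ∃ C : Fin (2 * n - 1) → Set I, (∀ j, (C j).OrdConnected) ∧ S = ⋃ j, C j := by
  classical
  set comp : I → Set I := fun t => {r | r ∈ S ∧ Set.uIcc t r ⊆ S} with hcomp
  have hsub : ∀ t, comp t ⊆ S := fun t r hr => hr.1
  have hmem : ∀ t ∈ S, t ∈ comp t := by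
    intro t ht
    exact ⟨ht, by simp [Set.uIcc_self, Set.singleton_subset_iff, ht]⟩
  have hconv : ∀ t, (comp t).OrdConnected := by
    intro t
    constructor
    rintro x ⟨hxS, hx⟩ y ⟨hyS, hy⟩ z hz
    have hxy : Set.uIcc x y ⊆ S := by
      refine subset_trans (Set.uIcc_subset_uIcc_union_uIcc (b := t)) ?_
      rw [Set.uIcc_comm x t]
      exact Set.union_subset hx hy
    have hzS : z ∈ S := hxy (Set.Icc_subset_uIcc hz)
    refine ⟨hzS, ?_⟩
    refine subset_trans (Set.uIcc_subset_uIcc_union_uIcc (b := x)) ?_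
    refine Set.union_subset hx ?_
    refine subset_trans ?_ hxy
    exact Set.uIcc_subset_uIcc Set.left_mem_uIcc (Set.Icc_subset_uIcc hz)
  have heq : ∀ t ∈ S, ∀ r ∈ comp t, comp r = comp t := by
    intro t ht r hr
    ext z
    constructor
    · rintro ⟨hzS, hz⟩
      refine ⟨hzS, ?_⟩
      refine subset_trans (Set.uIcc_subset_uIcc_union_uIcc (b := r)) (Set.union_subset hr.2 hz)
    · rintro ⟨hzS, hz⟩
      refine ⟨hzS, ?_⟩
      refine subset_trans (Set.uIcc_subset_uIcc_union_uIcc (b := t)) ?_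
      refine Set.union_subset ?_ hz
      rw [Set.uIcc_comm]; exact hr.2
  -- the set of components
  set T : Set (Set I) := comp '' S with hT
  -- any finset inside T has card ≤ n
  have hC1 : ∀ F : Finset (Set I), ↑F ⊆ T → F.card ≤ n := by
    intro F hF
    by_contra hlt
    push_neg at hlt
    -- choose representatives
    have hrep : ∀ c ∈ F, ∃ t, t ∈ S ∧ comp t = c := by
      intro c hc
      obtain ⟨t, ht, rfl⟩ := hF hc
      exact ⟨t, ht, rfl⟩
    choose rep hrepS hrepc using hrep
    -- image finset
    set G : Finset I := F.attach.image (fun c => rep c.1 c.2) with hG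
    have hinj : Function.Injective (fun c : {x // x ∈ F} => rep c.1 c.2) := by
      intro c c' hcc
      have h2 : comp (rep c.1 c.2) = comp (rep c'.1 c'.2) := by
        simpa using congrArg comp hcc
      rw [hrepc, hrepc] at h2
      exact Subtype.ext h2
    have hGcard : G.card = F.card := by
      rw [hG, Finset.card_image_of_injective _ hinj, Finset.card_attach]
    have hcard : n + 1 ≤ G.card := by omega
    obtain ⟨G', hG'sub, hG'card⟩ := Finset.exists_subset_card_eq hcard
    set x : Fin (n+1) → I := fun i => (G'.orderIsoOfFin hG'card i : I) with hx
    have hxmono : StrictMono x := fun i j hij => (G'.orderIsoOfFin hG'card).lt_iff_lt.2 hij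
    have hxG : ∀ i, x i ∈ G := fun i => hG'sub (G'.orderIsoOfFin hG'card i).2
    have hxS : ∀ i, x i ∈ S := by
      intro i
      obtain ⟨c, _, hc⟩ := Finset.mem_image.1 (hxG i)
      rw [← hc]; exact hrepS _ _
    have hxcomp : ∀ i j, x i = x j → i = j := by
      intro i j hij
      exact (G'.orderIsoOfFin hG'card).injective (Subtype.ext hij)
    have hxne : ∀ i j : Fin (n+1), i ≠ j → comp (x i) ≠ comp (x j) := by
      intro i j hij hcij
      apply hij
      apply hxcomp
      obtain ⟨c, _, hc⟩ := Finset.mem_image.1 (hxG i)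
      obtain ⟨c', _, hc'⟩ := Finset.mem_image.1 (hxG j)
      rw [← hc, ← hc'] at hcij ⊢
      rw [hrepc, hrepc] at hcij
      rw [show c = c' from Subtype.ext hcij]
    -- gaps
    have hgap : ∀ i : Fin n, ∃ r, x i.castSucc < r ∧ r < x i.succ ∧ r ∉ S := by
      intro i
      have hne : comp (x i.castSucc) ≠ comp (x i.succ) := by
        apply hxne
        intro h
        exact absurd (congrArg Fin.val h) (by simp [Fin.val_succ])
      have hnm : x i.succ ∉ comp (x i.castSucc) := by
        intro hmem'
        exact hne (heq _ (hxS _) _ hmem').symm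
      have hlt' : x i.castSucc < x i.succ := hxmono (Fin.castSucc_lt_succ (i := i))
      by_contra hno
      push_neg at hno
      apply hnm
      refine ⟨hxS _, ?_⟩
      intro z hz
      rw [Set.uIcc_of_le hlt'.le] at hz
      by_contra hzS
      rcases eq_or_lt_of_le hz.1 with h1 | h1
      · exact hzS (h1 ▸ hxS i.castSucc)
      rcases eq_or_lt_of_le hz.2 with h2 | h2
      · exact hzS (h2 ▸ hxS i.succ)
      exact hzS (hno z h1 h2)
    choose g hg1 hg2 hg3 using hgap
    -- interleave
    set u : Fin (2*n) → I := fun j =>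
      if h : (j:ℕ) % 2 = 0 then x ⟨(j:ℕ)/2, by omega⟩ else g ⟨(j:ℕ)/2, by omega⟩ with hu
    have humono : StrictMono u := by
      apply strictMono_of_adj
      intro p hp
      by_cases h : p % 2 = 0
      · have h' : ¬ ((p+1) % 2 = 0) := by omega
        simp only [hu, dif_pos h, dif_neg h']
        have h2 : (p+1)/2 = p/2 := by omega
        have := hg1 ⟨p/2, by omega⟩
        simp only [h2]
        convert this using 2
        rfl
      · have h' : (p+1) % 2 = 0 := by omega
        simp only [hu, dif_neg h, dif_pos h']
        have h2 : (p+1)/2 = p/2 + 1 := by omega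
        have := hg2 ⟨p/2, by omega⟩
        simp only [h2]
        convert this using 2
        rfl
    refine halt u humono ?_
    intro i
    by_cases h : (i:ℕ) % 2 = 0
    · simp only [hu, dif_pos h]
      constructor
      · intro _; exact Nat.even_iff.2 h
      · intro _; exact hxS _
    · simp only [hu, dif_neg h]
      constructor
      · intro hmem'; exact absurd hmem' (hg3 _)
      · intro hev; exact absurd (Nat.even_iff.1 hev) h
  -- T is finite
  have hTfin : T.Finite := by
    by_contra hinf
    obtain ⟨F, hFsub, hFcard⟩ := Set.Infinite.exists_subset_card_eq hinf (n+1)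
    have := hC1 F hFsub
    omega
  -- enumerate
  set F : Finset (Set I) := hTfin.toFinset with hF
  have hFT : ∀ c ∈ F, c ∈ T := by intro c hc; rwa [hF, Set.Finite.mem_toFinset] at hc
  have hFcard : F.card ≤ n := hC1 F (by intro c hc; exact hFT c hc)
  set e := F.equivFin with he
  refine ⟨fun j => if h : (j:ℕ) < F.card then (e.symm ⟨(j:ℕ), h⟩ : Set I) else ∅, ?_, ?_⟩
  · intro j
    by_cases h : (j:ℕ) < F.card
    · simp only [dif_pos h]
      obtain ⟨t, _, hc⟩ := hFT _ (e.symm ⟨(j:ℕ), h⟩).2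
      rw [← hc]; exact hconv t
    · simp only [dif_neg h]; exact Set.ordConnected_empty
  · ext t
    simp only [Set.mem_iUnion]
    constructor
    · intro ht
      have hct : comp t ∈ F := by rw [hF, Set.Finite.mem_toFinset]; exact ⟨t, ht, rfl⟩
      set j0 : Fin F.card := e ⟨comp t, hct⟩ with hj0
      have hj0lt : (j0 : ℕ) < 2 * n - 1 := by
        have := j0.2; omega
      refine ⟨⟨(j0:ℕ), hj0lt⟩, ?_⟩
      have h : ((⟨(j0:ℕ), hj0lt⟩ : Fin (2*n-1)) : ℕ) < F.card := j0.2
      simp only [dif_pos h]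
      have heq2 : e.symm ⟨(j0:ℕ), h⟩ = ⟨comp t, hct⟩ := by
        rw [Equiv.symm_apply_eq]
      have hval : (↑(e.symm ⟨(j0:ℕ), h⟩) : Set I) = comp t := by rw [heq2]
      rw [hval]
      exact hmem t ht
    · rintro ⟨j, hj⟩
      by_cases h : (j:ℕ) < F.card
      · rw [dif_pos h] at hj
        obtain ⟨r, _, hc⟩ := hFT _ (e.symm ⟨(j:ℕ), h⟩).2
        rw [← hc] at hj
        exact hsub r hj
      · rw [dif_neg h] at hj; exact absurd hj (Set.notMem_empty t)


open FirstOrder Language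

/-- Let `T` be a first-order theory, `φ(x̄, ȳ)` a formula, and `n` such that `T`
proves there are no `b̄ 0, …, b̄ (n-1)` with all `2ⁿ` Boolean combinations
`∃ x̄, ⋀ k, φ(x̄, b̄ k)^{η k}` consistent (stated semantically: no model of `T` contains such
tuples).  Then for every indiscernible sequence `⟨ā t : t ∈ I⟩` in a model `M` of `T` and every
tuple `b̄`, the set `{t : φ(b̄, ā t)}` is a union of at most `2n - 1` convex subsets of `I`. -/
theorem stmt_17 {L : Language} {M : Type w} [L.Structure M]
    (T : L.Theory) (hM : M ⊨ T)
    {α : Type*} {β : Type*} (φ : L.Formula (α ⊕ β)) (n : ℕ)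
    (hT : ∀ (N : Type w) (_ : L.Structure N), N ⊨ T →
      ¬ ∃ bb : Fin n → β → N, ∀ η : Fin n → Bool, ∃ x : α → N,
        ∀ k, (φ.Realize (Sum.elim x (bb k)) ↔ η k = true))
    {I : Type*} [LinearOrder I] (a : I → β → M)
    (hind : ∀ (m : ℕ) (ψ : L.Formula (Fin m × β)) (t s : Fin m → I),
      StrictMono t → StrictMono s →
        (ψ.Realize (fun p => a (t p.1) p.2) ↔ ψ.Realize (fun p => a (s p.1) p.2)))
    (b : α → M) :
    ∃ C : Fin (2 * n - 1) → Set I, (∀ j, (C j).OrdConnected) ∧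
      {t | φ.Realize (Sum.elim b (a t))} = ⋃ j, C j := by
  classical
  rcases Nat.eq_zero_or_pos n with hn | hn
  · subst hn
    refine ⟨fun _ => ∅, fun _ => Set.ordConnected_empty, ?_⟩
    haveI : IsEmpty (Fin (2 * 0 - 1)) := inferInstanceAs (IsEmpty (Fin 0))
    rw [Set.iUnion_of_empty]
    ext t
    simp only [Set.mem_setOf_eq, Set.mem_empty_iff_false, iff_false]
    intro ht
    exact hT M inferInstance hM ⟨fun _ => a t, fun _ => ⟨b, fun k => k.elim0⟩⟩
  · set S : Set I := {t | φ.Realize (Sum.elim b (a t))} with hS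
    -- restricted formula machinery
    set sV : Set (α ⊕ β) := ↑φ.freeVarFinset with hsV
    haveI hFinV : Finite ↥sV := by
      rw [hsV]; exact Set.Finite.to_subtype (φ.freeVarFinset.finite_toSet)
    have hsub : ↑φ.freeVarFinset ⊆ sV := by rw [hsV]
    set φ' : L.Formula ↥sV := φ.restrictFreeVar (Set.inclusion hsub) with hφ'
    have hres : ∀ v₀ : (α ⊕ β) → M,
        φ'.Realize (v₀ ∘ Subtype.val) ↔ φ.Realize v₀ := by
      intro v₀
      exact BoundedFormula.realize_restrictFreeVar' hsub
    set ρ : Fin n → ↥sV → (Fin n × β) ⊕ ↥sV :=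
      fun k z => Sum.elim (fun _ => Sum.inr z) (fun c => Sum.inl (k, c)) z.1 with hρ
    set χ : Fin n → L.Formula ((Fin n × β) ⊕ ↥sV) := fun k => φ'.relabel (ρ k) with hχ
    have hrel : ∀ (w : Fin n → I) (i : ↥sV → M) (x : α → M) (k : Fin n),
        (∀ a0 (h : Sum.inl a0 ∈ sV), i ⟨Sum.inl a0, h⟩ = x a0) →
        ((χ k).Realize (Sum.elim (fun p : Fin n × β => a (w p.1) p.2) i) ↔
          φ.Realize (Sum.elim x (a (w k)))) := by
      intro w i x k hix
      rw [hχ]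
      rw [Formula.realize_relabel]
      have hfe : (Sum.elim (fun p : Fin n × β => a (w p.1) p.2) i) ∘ ρ k =
          (Sum.elim x (a (w k))) ∘ Subtype.val := by
        funext z
        obtain ⟨y, hy⟩ := z
        cases y with
        | inl a0 =>
          simp only [hρ, Function.comp_apply, Sum.elim_inl]
          exact hix a0 hy
        | inr c =>
          simp only [hρ, Function.comp_apply, Sum.elim_inr]
          rfl
      rw [hfe]
      exact hres _
    -- the alternation property
    have halt : ∀ u : Fin (2*n) → I, StrictMono u →
        ¬ ∀ i : Fin (2*n), (u i ∈ S ↔ Even (i:ℕ)) := by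
      intro u hu hpat
      apply hT M inferInstance hM
      set s' : Fin n → I := fun k => u ⟨2*(k:ℕ), by omega⟩ with hs'
      have hs'mono : StrictMono s' := by
        intro k k' hk
        apply hu
        rw [Fin.mk_lt_mk]
        rw [Fin.lt_def] at hk
        omega
      refine ⟨fun k => a (s' k), fun η => ?_⟩
      set v : Fin n → I :=
        fun k => u ⟨2*(k:ℕ) + (if η k then 0 else 1), by split <;> omega⟩ with hv
      have hvmono : StrictMono v := by
        intro k k' hk
        apply hu
        rw [Fin.mk_lt_mk]
        rw [Fin.lt_def] at hk
        have h1 : (if η k then 0 else 1) ≤ 1 := by split <;> omega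
        have h2 : (0:ℕ) ≤ (if η k' then 0 else 1) := by omega
        omega
      have hvval : ∀ k, (φ.Realize (Sum.elim b (a (v k))) ↔ η k = true) := by
        intro k
        by_cases hk : η k = true
        · have h2 : v k = u ⟨2*(k:ℕ), by omega⟩ := by simp [hv, hk]
          have h3 := hpat ⟨2*(k:ℕ), by omega⟩
          rw [hS] at h3
          simp only [Set.mem_setOf_eq] at h3
          rw [h2, h3]
          exact ⟨fun _ => hk, fun _ => even_two_mul _⟩
        · have h2 : v k = u ⟨2*(k:ℕ)+1, by omega⟩ := by simp [hv, hk]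
          have h3 := hpat ⟨2*(k:ℕ)+1, by omega⟩
          rw [hS] at h3
          simp only [Set.mem_setOf_eq] at h3
          rw [h2, h3]
          constructor
          · intro hev
            exfalso
            rw [Nat.even_iff] at hev
            omega
          · intro h; exact absurd h hk
      -- build the formula
      set Θ : L.Formula ((Fin n × β) ⊕ ↥sV) :=
        BoundedFormula.iInf
          (fun k => if η k = true then χ k else (χ k).not) with hΘdef
      set ψ : L.Formula (Fin n × β) := Formula.iExs (↥sV) Θ with hψdef
      have hΘ : ∀ (W : ((Fin n × β) ⊕ ↥sV) → M),
          Θ.Realize W ↔ ∀ k, ((χ k).Realize W ↔ η k = true) := by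
        intro W
        rw [hΘdef]
        show BoundedFormula.Realize _ W default ↔ _
        rw [BoundedFormula.realize_iInf]
        constructor
        · intro h k
          have h4 := h k
          by_cases hk : η k = true
          · rw [if_pos hk] at h4
            exact ⟨fun _ => hk, fun _ => h4⟩
          · rw [if_neg hk] at h4
            rw [BoundedFormula.realize_not] at h4
            exact ⟨fun hc => absurd hc h4, fun he => absurd he hk⟩
        · intro h k
          by_cases hk : η k = true
          · rw [if_pos hk]; exact (h k).2 hk
          · rw [if_neg hk]
            rw [BoundedFormula.realize_not]
            intro hc
            exact hk ((h k).1 hc)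
      set k₀ : Fin n := ⟨0, hn⟩ with hk₀
      have h1 : ψ.Realize (fun p : Fin n × β => a (v p.1) p.2) := by
        rw [hψdef, Formula.realize_iExs]
        refine ⟨fun z => Sum.elim b (a (v k₀)) z.1, ?_⟩
        have h5 : (fun y => Sum.elim (fun p : Fin n × β => a (v p.1) p.2)
            (fun z : ↥sV => Sum.elim b (a (v k₀)) z.1) (id y)) =
            Sum.elim (fun p : Fin n × β => a (v p.1) p.2)
            (fun z : ↥sV => Sum.elim b (a (v k₀)) z.1) := rfl
        rw [hΘ]
        intro k
        rw [hrel v _ b k (fun a0 h => rfl)]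
        exact hvval k
      have h2 := (hind n ψ v s' hvmono hs'mono).1 h1
      rw [hψdef, Formula.realize_iExs] at h2
      obtain ⟨i, hi⟩ := h2
      have h5 : (fun y => Sum.elim (fun p : Fin n × β => a (s' p.1) p.2) i (id y)) =
          Sum.elim (fun p : Fin n × β => a (s' p.1) p.2) i := rfl
      rw [hΘ] at hi
      refine ⟨fun a0 => if h : Sum.inl a0 ∈ sV then i ⟨Sum.inl a0, h⟩ else b a0, ?_⟩
      intro k
      rw [← hrel s' i _ k ?_]
      · exact hi k
      · intro a0 h
        rw [dif_pos h]
    exact aux_cover S n hn halt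
end

section
/- Let ⟨a¹ₜ : t ∈ I¹⟩ and ⟨a²ₛ : s ∈ I²⟩ be two indiscernible sequences in a model of a dependent (NIP) theory, with I¹, I² endless linear orders. Then for every formula φ(x̄, ȳ) (possibly with parameters) there exists a truth value 𝐭 such that for all sufficiently large t ∈ I¹, for all sufficiently large s ∈ I², φ(a¹ₜ, a²ₛ) holds iff 𝐭. -/
open FirstOrder Language

section Aux

variable {L : Language} {M : Type*} [L.Structure M]

/-- Pattern formula: over `Fin m × β`, says
`∃ x : α → M, ∀ j, ψ(x, y_j) ↔ j even`. -/
noncomputable def patternFormula {α β : Type} [Finite α] (ψ : L.Formula (α ⊕ β)) (m : ℕ) :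
    L.Formula (Fin m × β) :=
  Formula.iExs α (Formula.relabel
    (Sum.elim Sum.inr Sum.inl : α ⊕ (Fin m × β) → (Fin m × β) ⊕ α)
    (BoundedFormula.iInf (fun j : Fin m =>
      if (j : ℕ) % 2 = 0
      then (ψ.relabel (Sum.map id (fun c => (j, c))))
      else (ψ.relabel (Sum.map id (fun c => (j, c)))).not)))

lemma realize_patternFormula {α β : Type} [Finite α] (ψ : L.Formula (α ⊕ β)) (m : ℕ)
    (v : Fin m × β → M) :
    (patternFormula ψ m).Realize v ↔
      ∃ x : α → M, ∀ j : Fin m,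
        (ψ.Realize (Sum.elim x (fun c => v (j, c))) ↔ (j : ℕ) % 2 = 0) := by
  rw [patternFormula, Formula.realize_iExs]
  refine exists_congr fun x => ?_
  rw [Formula.realize_relabel]
  have hv : (Sum.elim v x ∘ (Sum.elim Sum.inr Sum.inl : α ⊕ (Fin m × β) → _))
      = Sum.elim x v := by funext a; cases a <;> rfl
  rw [hv]
  rw [show (Formula.Realize (M := M)
      (BoundedFormula.iInf (fun j : Fin m =>
        if (j : ℕ) % 2 = 0
        then (ψ.relabel (Sum.map id (fun c => (j, c))))
        else (ψ.relabel (Sum.map id (fun c => (j, c)))).not)) (Sum.elim x v))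
    = (BoundedFormula.Realize (M := M)
      (BoundedFormula.iInf (fun j : Fin m =>
        if (j : ℕ) % 2 = 0
        then (ψ.relabel (Sum.map id (fun c => (j, c))))
        else (ψ.relabel (Sum.map id (fun c => (j, c)))).not)) (Sum.elim x v) default) from rfl]
  rw [BoundedFormula.realize_iInf]
  constructor
  · intro h j
    have hj := h j
    have hrel : (Formula.Realize (M := M) (ψ.relabel (Sum.map id (fun c => (j, c))))
        (Sum.elim x v)) ↔ ψ.Realize (Sum.elim x (fun c => v (j, c))) := by
      rw [Formula.realize_relabel]
      have : (Sum.elim x v) ∘ (Sum.map id (fun c => (j, c)))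
          = Sum.elim x (fun c => v (j, c)) := by funext a; cases a <;> rfl
      rw [this]
    by_cases hpar : (j : ℕ) % 2 = 0
    · rw [if_pos hpar] at hj
      simp only [hpar, iff_true]
      exact hrel.mp hj
    · rw [if_neg hpar] at hj
      rw [BoundedFormula.realize_not] at hj
      simp only [hpar, iff_false]
      exact fun hh => hj (hrel.mpr hh)
  · intro h j
    have hj := h j
    have hrel : (Formula.Realize (M := M) (ψ.relabel (Sum.map id (fun c => (j, c))))
        (Sum.elim x v)) ↔ ψ.Realize (Sum.elim x (fun c => v (j, c))) := by
      rw [Formula.realize_relabel]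
      have : (Sum.elim x v) ∘ (Sum.map id (fun c => (j, c)))
          = Sum.elim x (fun c => v (j, c)) := by funext a; cases a <;> rfl
      rw [this]
    by_cases hpar : (j : ℕ) % 2 = 0
    · rw [if_pos hpar]
      exact hrel.mpr (hj.mpr hpar)
    · rw [if_neg hpar]
      rw [BoundedFormula.realize_not]
      exact fun hh => hpar (hj.mp (hrel.mp hh))

/-- Key lemma: bounded alternation along an indiscernible sequence, from NIP bound. -/
lemma alt_bound {α β I : Type} [Finite α] [LinearOrder I] (a : I → β → M)
    (hind : ∀ (m : ℕ) (ψ : L.Formula (Fin m × β)) (t s : Fin m → I),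
      StrictMono t → StrictMono s →
        (ψ.Realize (fun p => a (t p.1) p.2) ↔ ψ.Realize (fun p => a (s p.1) p.2)))
    (ψ : L.Formula (α ⊕ β)) (n : ℕ)
    (hn : ¬ ∃ bb : Fin n → β → M, ∀ η : Fin n → Bool, ∃ x : α → M,
        ∀ k, (ψ.Realize (Sum.elim x (bb k)) ↔ η k = true))
    (x : α → M) (s : Fin (4 * n + 2) → I) (hs : StrictMono s)
    (hpat : ∀ i : Fin (4 * n + 2),
      (ψ.Realize (Sum.elim x (a (s i))) ↔ (i : ℕ) % 2 = 0)) : False := by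
  apply hn
  refine ⟨fun k => a (s ⟨4 * (k : ℕ) + 2, by omega⟩), fun η => ?_⟩
  set θ := patternFormula ψ (2 * n) with hθ
  set u : Fin (2 * n) → I := fun j => s ⟨(j : ℕ), by omega⟩ with hu
  have humono : StrictMono u := fun i j hij => hs (by simpa using hij)
  have hθu : θ.Realize (fun p : Fin (2 * n) × β => a (u p.1) p.2) := by
    rw [hθ, realize_patternFormula]
    exact ⟨x, fun j => hpat ⟨(j : ℕ), by omega⟩⟩
  -- the shifted tuple, depending on η
  set η' : ℕ → Bool := fun k => if h : k < n then η ⟨k, h⟩ else true with hη'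
  set gv : ℕ → ℕ := fun j => 4 * (j / 2) + j % 2 + (if η' (j / 2) then 2 else 1) with hgv
  have hgvle : ∀ j, gv j ≤ 4 * (j / 2) + j % 2 + 2 := by
    intro j
    simp only [hgv]
    split <;> omega
  have hgvge : ∀ j, 4 * (j / 2) + j % 2 + 1 ≤ gv j := by
    intro j
    simp only [hgv]
    split <;> omega
  set g : Fin (2 * n) → Fin (4 * n + 2) := fun j =>
    ⟨gv (j : ℕ), by have h1 := hgvle (j : ℕ); have h2 := j.isLt; omega⟩ with hg
  have hgmono : StrictMono g := by
    intro i j hij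
    have hij' : (i : ℕ) < (j : ℕ) := hij
    show (g i : ℕ) < (g j : ℕ)
    simp only [hg]
    by_cases hcase : (i : ℕ) / 2 = (j : ℕ) / 2
    · simp only [hgv, hcase]
      omega
    · have h1 := hgvle (i : ℕ)
      have h2 := hgvge (j : ℕ)
      omega
  set w : Fin (2 * n) → I := fun j => s (g j) with hw
  have hwmono : StrictMono w := fun i j hij => hs (hgmono hij)
  have hθw : θ.Realize (fun p : Fin (2 * n) × β => a (w p.1) p.2) :=
    (hind (2 * n) θ u w humono hwmono).mp hθu
  rw [hθ, realize_patternFormula] at hθw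
  obtain ⟨x', hx'⟩ := hθw
  refine ⟨x', fun k => ?_⟩
  have hηk : η' ((k : ℕ)) = η k := by
    simp only [hη', k.isLt, dif_pos, Fin.eta]
  by_cases hk : η k = true
  · have hj := hx' ⟨2 * (k : ℕ), by omega⟩
    have hgj : g ⟨2 * (k : ℕ), by omega⟩ = ⟨4 * (k : ℕ) + 2, by omega⟩ := by
      apply Fin.ext
      simp only [hg, hgv, Fin.val_mk]
      have hdiv : 2 * (k : ℕ) / 2 = (k : ℕ) := by omega
      rw [hdiv, hηk, if_pos hk]
      omega
    rw [hw] at hj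
    simp only [hgj] at hj
    rw [hk]
    simp only [iff_true]
    refine hj.mpr ?_
    show 2 * (k : ℕ) % 2 = 0
    omega
  · have hj := hx' ⟨2 * (k : ℕ) + 1, by omega⟩
    have hgj : g ⟨2 * (k : ℕ) + 1, by omega⟩ = ⟨4 * (k : ℕ) + 2, by omega⟩ := by
      apply Fin.ext
      simp only [hg, hgv, Fin.val_mk]
      have hdiv : (2 * (k : ℕ) + 1) / 2 = (k : ℕ) := by omega
      rw [hdiv, hηk, if_neg hk]
      omega
    rw [hw] at hj
    simp only [hgj] at hj
    have hnr : ¬ ψ.Realize (Sum.elim x' (a (s ⟨4 * (k : ℕ) + 2, by omega⟩))) := by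
      intro hh
      have h2 := hj.mp hh
      have : (2 * (k : ℕ) + 1) % 2 = 0 := h2
      omega
    simp only [hnr, false_iff]
    exact hk

/-- From non-eventual-constancy, extract an infinite alternating chain. -/
lemma exists_alt_chain {I : Type} [LinearOrder I] [Nonempty I] [NoMaxOrder I] (v : I → Prop)
    (h : ¬ ∃ b : Bool, ∃ s₀ : I, ∀ s ≥ s₀, (v s ↔ b = true)) :
    ∃ c : ℕ → I, StrictMono c ∧ ∀ i : ℕ, (v (c i) ↔ i % 2 = 0) := by
  push_neg at h
  have htrue : ∀ s₀ : I, ∃ s, s₀ ≤ s ∧ v s := by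
    intro s₀
    obtain ⟨s, hs, hvs⟩ := h false s₀
    exact ⟨s, hs, by simpa using hvs⟩
  have hfalse : ∀ s₀ : I, ∃ s, s₀ ≤ s ∧ ¬ v s := by
    intro s₀
    obtain ⟨s, hs, hvs⟩ := h true s₀
    exact ⟨s, hs, by simpa using hvs⟩
  have step : ∀ (i : ℕ) (x : I), ∃ y, x < y ∧ (v y ↔ (i + 1) % 2 = 0) := by
    intro i x
    obtain ⟨z, hz⟩ := exists_gt x
    by_cases hpar : (i + 1) % 2 = 0
    · obtain ⟨y, hy, hvy⟩ := htrue z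
      exact ⟨y, lt_of_lt_of_le hz hy, by simp [hpar, hvy]⟩
    · obtain ⟨y, hy, hvy⟩ := hfalse z
      exact ⟨y, lt_of_lt_of_le hz hy, by simp [hpar, hvy]⟩
  choose F hF1 hF2 using step
  obtain ⟨c0, _, hc0⟩ := htrue (Classical.arbitrary I)
  let c : ℕ → I := fun n => Nat.rec c0 (fun i x => F i x) n
  have hcs : ∀ i, c (i + 1) = F i (c i) := fun i => rfl
  refine ⟨c, strictMono_nat_of_lt_succ (fun i => by rw [hcs]; exact hF1 i (c i)), ?_⟩
  intro i
  cases i with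
  | zero => exact iff_of_true hc0 rfl
  | succ i => rw [hcs]; exact hF2 i (c i)

/-- Restrict the left-hand variables of a formula to a finite type. -/
lemma restrict_left {A B : Type} (ψ : L.Formula (A ⊕ B)) :
    ∃ (A' : Type) (_ : Finite A') (res : (A → M) → (A' → M)) (ψ' : L.Formula (A' ⊕ B)),
      ∀ (x : A → M) (y : B → M),
        (ψ'.Realize (Sum.elim (res x) y) ↔ ψ.Realize (Sum.elim x y)) := by
  classical
  set S := ψ.freeVarFinset with hS
  refine ⟨{a : A // Sum.inl a ∈ S}, ?_, fun x a' => x a'.1, ?_, ?_⟩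
  · exact Finite.of_injective (fun a => (⟨Sum.inl a.1, a.2⟩ : {z // z ∈ S}))
      (fun a b hab => Subtype.ext (by
        have := congrArg Subtype.val hab
        exact Sum.inl_injective this))
  · exact Formula.relabel
      (fun e : {z // z ∈ (↑S : Set (A ⊕ B))} =>
        match e with
        | ⟨Sum.inl a, h⟩ => Sum.inl ⟨a, by simpa using h⟩
        | ⟨Sum.inr b, _⟩ => Sum.inr b)
      (ψ.restrictFreeVar (Set.inclusion (Set.Subset.refl (↑S : Set (A ⊕ B)))))
  · intro x y
    rw [Formula.realize_relabel]
    have key : (Sum.elim (fun a' : {a : A // Sum.inl a ∈ S} => x a'.1) y) ∘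
        (fun e : {z // z ∈ (↑S : Set (A ⊕ B))} =>
          match e with
          | ⟨Sum.inl a, h⟩ => Sum.inl ⟨a, by simpa using h⟩
          | ⟨Sum.inr b, _⟩ => Sum.inr b)
        = (Sum.elim x y) ∘ (Subtype.val) := by
      funext e
      rcases e with ⟨a | b, h⟩ <;> rfl
    rw [key]
    exact BoundedFormula.realize_restrictFreeVar' (Set.Subset.refl _)

end Aux

/-- Let `M` be a model of a dependent (NIP) theory: every formula has finite
independence dimension.  Let `⟨a1 t : t ∈ I₁⟩`, `⟨a2 s : s ∈ I₂⟩` be indiscernible sequences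
with `I₁, I₂` endless.  Then for every formula `φ(x̄, ȳ, z̄)` with parameters `d̄` there is a
truth value `b` such that for all sufficiently large `t ∈ I₁`, for all sufficiently large
`s ∈ I₂`, `φ(a1 t, a2 s, d̄)` holds iff `b`. -/
theorem stmt_18 {L : Language} {M : Type*} [L.Structure M]
    (hNIP : ∀ (α β : Type) (ψ : L.Formula (α ⊕ β)), ∃ n : ℕ,
      ¬ ∃ bb : Fin n → β → M, ∀ η : Fin n → Bool, ∃ x : α → M,
        ∀ k, (ψ.Realize (Sum.elim x (bb k)) ↔ η k = true))
    {I₁ I₂ : Type} [LinearOrder I₁] [LinearOrder I₂] [Nonempty I₁] [Nonempty I₂]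
    [NoMaxOrder I₁] [NoMaxOrder I₂]
    {γ₁ γ₂ δ : Type}
    (a1 : I₁ → γ₁ → M) (a2 : I₂ → γ₂ → M)
    (hind1 : ∀ (m : ℕ) (ψ : L.Formula (Fin m × γ₁)) (t s : Fin m → I₁),
      StrictMono t → StrictMono s →
        (ψ.Realize (fun p => a1 (t p.1) p.2) ↔ ψ.Realize (fun p => a1 (s p.1) p.2)))
    (hind2 : ∀ (m : ℕ) (ψ : L.Formula (Fin m × γ₂)) (t s : Fin m → I₂),
      StrictMono t → StrictMono s →
        (ψ.Realize (fun p => a2 (t p.1) p.2) ↔ ψ.Realize (fun p => a2 (s p.1) p.2)))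
    (φ : L.Formula ((γ₁ ⊕ γ₂) ⊕ δ)) (d : δ → M) :
    ∃ b : Bool, ∃ t₀ : I₁, ∀ t ≥ t₀, ∃ s₀ : I₂, ∀ s ≥ s₀,
      (φ.Realize (Sum.elim (Sum.elim (a1 t) (a2 s)) d) ↔ b = true) := by
  classical
  -- Step A: for each `t` there is an eventual truth value in `s`.
  set r₁ : ((γ₁ ⊕ γ₂) ⊕ δ) → ((γ₁ ⊕ δ) ⊕ γ₂) :=
    Sum.elim (Sum.elim (Sum.inl ∘ Sum.inl) Sum.inr) (Sum.inl ∘ Sum.inr) with hr₁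
  obtain ⟨A₁, hfin₁, res₁, ψ₁, hψ₁⟩ := restrict_left (M := M) (φ.relabel r₁)
  haveI : Finite A₁ := hfin₁
  obtain ⟨n₁, hn₁⟩ := hNIP A₁ γ₂ ψ₁
  have keyA : ∀ (t : I₁) (y : γ₂ → M),
      (ψ₁.Realize (Sum.elim (res₁ (Sum.elim (a1 t) d)) y) ↔
        φ.Realize (Sum.elim (Sum.elim (a1 t) y) d)) := by
    intro t y
    rw [hψ₁, Formula.realize_relabel]
    have : (Sum.elim (Sum.elim (a1 t) d) y) ∘ r₁ = Sum.elim (Sum.elim (a1 t) y) d := by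
      funext z
      rcases z with (z | z) | z <;> rfl
    rw [this]
  have stepA : ∀ t : I₁, ∃ b : Bool, ∃ s₀ : I₂, ∀ s ≥ s₀,
      (φ.Realize (Sum.elim (Sum.elim (a1 t) (a2 s)) d) ↔ b = true) := by
    intro t
    by_contra hcon
    obtain ⟨c, hc, hcv⟩ := exists_alt_chain
      (fun s => φ.Realize (Sum.elim (Sum.elim (a1 t) (a2 s)) d)) hcon
    refine alt_bound a2 hind2 ψ₁ n₁ hn₁ (res₁ (Sum.elim (a1 t) d))
      (fun i : Fin (4 * n₁ + 2) => c (i : ℕ)) (fun i j hij => hc (by simpa using hij)) ?_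
    intro i
    rw [keyA t (a2 (c (i : ℕ)))]
    exact hcv (i : ℕ)
  choose f s₀f hf using stepA
  -- Step B: the eventual value `f` is itself eventually constant.
  suffices h : ∃ b : Bool, ∃ t₀ : I₁, ∀ t ≥ t₀, f t = b by
    obtain ⟨b, t₀, hb⟩ := h
    refine ⟨b, t₀, fun t ht => ⟨s₀f t, fun s hs => ?_⟩⟩
    rw [hf t s hs, hb t ht]
  by_contra hcon
  have hcon' : ¬ ∃ b : Bool, ∃ t₀ : I₁, ∀ t ≥ t₀, ((f t = true) ↔ b = true) := by
    rintro ⟨b, t₀, hb⟩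
    refine hcon ⟨b, t₀, fun t ht => ?_⟩
    have := hb t ht
    cases b
    · simp only [Bool.false_eq_true, iff_false, Bool.not_eq_true] at this
      exact this
    · simpa using this
  obtain ⟨c, hc, hcv⟩ := exists_alt_chain (fun t => f t = true) hcon'
  set r₂ : ((γ₁ ⊕ γ₂) ⊕ δ) → ((γ₂ ⊕ δ) ⊕ γ₁) :=
    Sum.elim (Sum.elim Sum.inr (Sum.inl ∘ Sum.inl)) (Sum.inl ∘ Sum.inr) with hr₂
  obtain ⟨A₂, hfin₂, res₂, ψ₂, hψ₂⟩ := restrict_left (M := M) (φ.relabel r₂)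
  haveI : Finite A₂ := hfin₂
  obtain ⟨n₂, hn₂⟩ := hNIP A₂ γ₁ ψ₂
  have keyB : ∀ (s : I₂) (y : γ₁ → M),
      (ψ₂.Realize (Sum.elim (res₂ (Sum.elim (a2 s) d)) y) ↔
        φ.Realize (Sum.elim (Sum.elim y (a2 s)) d)) := by
    intro s y
    rw [hψ₂, Formula.realize_relabel]
    have : (Sum.elim (Sum.elim (a2 s) d) y) ∘ r₂ = Sum.elim (Sum.elim y (a2 s)) d := by
      funext z
      rcases z with (z | z) | z <;> rfl
    rw [this]
  -- pick a common large `s` for the finitely many `c i`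
  obtain ⟨S, hS⟩ := Finite.exists_le (fun i : Fin (4 * n₂ + 2) => s₀f (c (i : ℕ)))
  refine alt_bound a1 hind1 ψ₂ n₂ hn₂ (res₂ (Sum.elim (a2 S) d))
    (fun i : Fin (4 * n₂ + 2) => c (i : ℕ)) (fun i j hij => hc (by simpa using hij)) ?_
  intro i
  rw [keyB S (a1 (c (i : ℕ)))]
  rw [hf (c (i : ℕ)) S (hS i)]
  exact hcv (i : ℕ)
end

section
/- Let ⟨a¹ₜ : t ∈ I¹⟩, ⟨a²ₛ : s ∈ I²⟩ be endless indiscernible sequences in a model, and suppose they are not A-perpendicular for some nonempty parameter set A: i.e., some formula φ(x, y, d̄) with d̄ ⊆ A satisfies (for a fixed truth value on one side and its negation on the other) 'for every large enough t ∈ I¹, for every large enough s ∈ I², φ(a¹ₜ, a²ₛ, d̄)' but 'for every large enough s ∈ I², for every large enough t ∈ I¹, ¬φ(a¹ₜ, a²ₛ, d̄)'. Then the cofinalities of I¹ and I² are equal. -/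
open FirstOrder Language

/-- The cofinality of a linear order: the least cardinality of a cofinal (unbounded) subset. -/
noncomputable def cofin (I : Type u) [LinearOrder I] : Cardinal.{u} :=
  sInf {c : Cardinal.{u} | ∃ S : Set I, c = Cardinal.mk S ∧ ∀ t : I, ∃ s ∈ S, t ≤ s}

theorem cofin_le_of_tendsto {I J : Type u} [LinearOrder I] [LinearOrder J]
    (f : J → I) (hf : ∀ t : I, ∃ s₁ : J, ∀ s ≥ s₁, t ≤ f s) : cofin I ≤ cofin J := by
  apply le_csInf
  · exact ⟨Cardinal.mk (Set.univ : Set J), Set.univ, rfl,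
      fun t => ⟨t, Set.mem_univ t, le_rfl⟩⟩
  · rintro c ⟨S, rfl, hS⟩
    have h1 : cofin I ≤ Cardinal.mk (f '' S) := by
      apply csInf_le'
      refine ⟨f '' S, rfl, fun t => ?_⟩
      obtain ⟨s₁, hs₁⟩ := hf t
      obtain ⟨s, hsS, hss⟩ := hS s₁
      exact ⟨f s, Set.mem_image_of_mem f hsS, hs₁ s hss⟩
    exact h1.trans Cardinal.mk_image_le

/-- Let `⟨a1 t : t ∈ I₁⟩`, `⟨a2 s : s ∈ I₂⟩` be endless indiscernible sequences
in a model `M`, and suppose they are not `A`-perpendicular: some formula `φ(x, y, d̄)` with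
parameters `d̄` from a nonempty set `A` satisfies 'for every large enough `t ∈ I₁`, for every
large enough `s ∈ I₂`, `φ(a1 t, a2 s, d̄)`' but 'for every large enough `s ∈ I₂`, for every
large enough `t ∈ I₁`, `¬ φ(a1 t, a2 s, d̄)`'.  Then `I₁` and `I₂` have equal cofinality. -/
theorem stmt_19 {L : Language} {M : Type*} [L.Structure M]
    {I₁ I₂ : Type u} [LinearOrder I₁] [LinearOrder I₂] [Nonempty I₁] [Nonempty I₂]
    [NoMaxOrder I₁] [NoMaxOrder I₂]
    (a1 : I₁ → M) (a2 : I₂ → M)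
    (hind1 : ∀ (m : ℕ) (ψ : L.Formula (Fin m)) (t s : Fin m → I₁),
      StrictMono t → StrictMono s →
        (ψ.Realize (fun p => a1 (t p)) ↔ ψ.Realize (fun p => a1 (s p))))
    (hind2 : ∀ (m : ℕ) (ψ : L.Formula (Fin m)) (t s : Fin m → I₂),
      StrictMono t → StrictMono s →
        (ψ.Realize (fun p => a2 (t p)) ↔ ψ.Realize (fun p => a2 (s p))))
    {δ : Type*} (φ : L.Formula ((Unit ⊕ Unit) ⊕ δ)) (d : δ → M)
    (h1 : ∃ t₀, ∀ t ≥ t₀, ∃ s₀, ∀ s ≥ s₀,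
      φ.Realize (Sum.elim (Sum.elim (fun _ => a1 t) fun _ => a2 s) d))
    (h2 : ∃ s₀, ∀ s ≥ s₀, ∃ t₀, ∀ t ≥ t₀,
      ¬ φ.Realize (Sum.elim (Sum.elim (fun _ => a1 t) fun _ => a2 s) d)) :
    cofin I₁ = cofin I₂ := by
  obtain ⟨t₀, ht⟩ := h1
  obtain ⟨s₀, hs⟩ := h2
  have hF : ∀ t : I₁, ∃ s₁ : I₂, ∀ s ≥ s₁,
      φ.Realize (Sum.elim (Sum.elim (fun _ => a1 (max t t₀)) fun _ => a2 s) d) :=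
    fun t => ht (max t t₀) (le_max_right _ _)
  choose F hF' using hF
  have hG : ∀ s : I₂, ∃ t₁ : I₁, ∀ t ≥ t₁,
      ¬ φ.Realize (Sum.elim (Sum.elim (fun _ => a1 t) fun _ => a2 (max s s₀)) d) :=
    fun s => hs (max s s₀) (le_max_right _ _)
  choose G hG' using hG
  apply le_antisymm
  · refine cofin_le_of_tendsto G (fun t => ⟨max (F t) s₀, fun s hsmax => ?_⟩)
    have hs0 : s₀ ≤ s := le_trans (le_max_right _ _) hsmax
    by_contra hlt
    push_neg at hlt
    have hphi := hF' t s (le_trans (le_max_left _ _) hsmax)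
    have hnphi := hG' s (max t t₀) (le_of_lt (lt_of_lt_of_le hlt (le_max_left _ _)))
    rw [max_eq_left hs0] at hnphi
    exact hnphi hphi
  · refine cofin_le_of_tendsto F (fun s => ⟨max (G s) t₀, fun t htmax => ?_⟩)
    have ht0 : t₀ ≤ t := le_trans (le_max_right _ _) htmax
    by_contra hlt
    push_neg at hlt
    have hnphi := hG' s t (le_trans (le_max_left _ _) htmax)
    have hphi := hF' t (max s s₀) (le_of_lt (lt_of_lt_of_le hlt (le_max_left _ _)))
    rw [max_eq_left ht0] at hphi
    exact hnphi hphi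
end
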